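/- Let X be a measurable space, γ ∈ [0,1), r : X → ℝ a bounded measurable reward with 0 ≤ r ≤ r_max, μ₀ a probability measure on X, and λ ≥ γ. Let Π be an index set and, for each π ∈ Π, let κ_π and η_π be Markov kernels from X to X and u_π : X → ℝ a bounded measurable function with u_π ≥ 0 such that |∫ V_{κ_π}(y) η_π(x, dy) − ∫ V_{κ_π}(y) κ_π(x, dy)| ≤ u_π(x) for all x ∈ X, where V_{κ_π}(x) := Σ_{n≥0} γ^n E_{P^{κ_π}_x}[r(X_n)]. Write J(ζ) := ∫ V_ζ dμ₀, let μ^{η_π}_t be the law of X_t under the η_π-chain from μ₀, define the penalized objective J̃(π) := Σ_{t≥0} γ^t ∫ (r − λ·u_π) dμ^{η_π}_t and the penalty mass ε(π) := Σ_{t≥0} γ^t ∫ u_π dμ^{η_π}_t. If π̂ ∈ Π satisfies J̃(π̂) ≥ J̃(π) for all π ∈ Π, then for every π ∈ Π: J(κ_{π̂}) ≥ J(κ_π) − (λ + γ)·ε(π). -/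

import Mathlib

open MeasureTheory ProbabilityTheory

/-- The `n`-step transition kernel of a time-homogeneous Markov chain with one-step
kernel `κ`; under the Ionescu–Tulcea trajectory measure `P^κ_x`, the law of `X n` is
`kIter κ n x`. -/
noncomputable def kIter {X : Type*} [MeasurableSpace X] (κ : Kernel X X) : ℕ → Kernel X X
  | 0 => Kernel.id
  | n + 1 => κ ∘ₖ kIter κ n

/-- The discounted value `V_κ(x) = Σ_{n≥0} γ^n E_{P^κ_x}[r(X_n)]`. -/
noncomputable def discVal {X : Type*} [MeasurableSpace X] (κ : Kernel X X) (γ : ℝ)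
    (r : X → ℝ) (x : X) : ℝ :=
  ∑' n : ℕ, γ ^ n * ∫ y, r y ∂(kIter κ n x)

/-- The objective `J(κ) = ∫ V_κ dμ₀`. -/
noncomputable def discJ {X : Type*} [MeasurableSpace X] (κ : Kernel X X) (γ : ℝ)
    (r : X → ℝ) (μ₀ : Measure X) : ℝ :=
  ∫ x, discVal κ γ r x ∂μ₀

/-- The law `μ^η_t` of `X_t` under the `η`-chain started from `μ₀`. -/
noncomputable def marginal {X : Type*} [MeasurableSpace X] (η : Kernel X X)
    (μ₀ : Measure X) (t : ℕ) : Measure X :=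
  μ₀.bind (kIter η t)

/-!
Write `V = V_κ` for the value of the physical chain and `(P_η V)(x) = ∫ V dη(x)`. Telescoping
`V` along the digital-twin chain, `∫ V dμ₀ = Σ_t γ^t ∫ (V - γ P_η V) dμ^η_t`, and inserting the
Bellman equation `V = r + γ P_κ V` gives the simulation identity
`J(κ) = Σ_t γ^t ∫ r dμ^η_t + γ Σ_t γ^t ∫ (P_κ V - P_η V) dμ^η_t`.
The gap bound makes the last sum at most `ε` in absolute value, so
`|J(κ_π) - J̃(π) - λ ε(π)| ≤ γ ε(π)` for every policy, and then
`J(κ_π̂) ≥ J̃(π̂) + (λ - γ) ε(π̂) ≥ J̃(π̂) ≥ J̃(π) ≥ J(κ_π) - (λ + γ) ε(π)`.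
-/

section

variable {X : Type*} [MeasurableSpace X]

def IsBoundedMeasurable (f : X → ℝ) : Prop :=
  Measurable f ∧ ∃ C, ∀ x, |f x| ≤ C

lemma abs_integral_le_of_abs_le {f : X → ℝ} {C : ℝ} (hC : ∀ x, |f x| ≤ C) (μ : Measure X)
    [IsProbabilityMeasure μ] :
    |∫ x, f x ∂μ| ≤ C := by
  simpa using norm_integral_le_of_norm_le_const (μ := μ)
    (ae_of_all _ fun x => (Real.norm_eq_abs (f x)).trans_le (hC x))

namespace IsBoundedMeasurable

variable {f g : X → ℝ}

lemma integrable (hf : IsBoundedMeasurable f) (μ : Measure X) [IsFiniteMeasure μ] :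
    Integrable f μ :=
  let ⟨hm, C, hC⟩ := hf
  .of_bound hm.aestronglyMeasurable C (ae_of_all _ fun x => (Real.norm_eq_abs _).trans_le (hC x))

lemma add (hf : IsBoundedMeasurable f) (hg : IsBoundedMeasurable g) :
    IsBoundedMeasurable fun x => f x + g x :=
  let ⟨hfm, C, hC⟩ := hf
  let ⟨hgm, D, hD⟩ := hg
  ⟨hfm.add hgm, C + D, fun x => (abs_add_le _ _).trans (add_le_add (hC x) (hD x))⟩

lemma const_mul (hf : IsBoundedMeasurable f) (c : ℝ) : IsBoundedMeasurable fun x => c * f x :=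
  let ⟨hm, C, hC⟩ := hf
  ⟨hm.const_mul c, |c| * C, fun x => by
    rw [abs_mul]; exact mul_le_mul_of_nonneg_left (hC x) (abs_nonneg c)⟩

lemma sub (hf : IsBoundedMeasurable f) (hg : IsBoundedMeasurable g) :
    IsBoundedMeasurable fun x => f x - g x := by
  simpa only [sub_eq_add_neg, neg_one_mul] using hf.add (hg.const_mul (-1))

lemma integral_kernel (hf : IsBoundedMeasurable f) (κ : Kernel X X) [IsMarkovKernel κ] :
    IsBoundedMeasurable fun x => ∫ y, f y ∂κ x :=
  let ⟨hm, C, hC⟩ := hf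
  ⟨(hm.stronglyMeasurable.integral_kernel (κ := κ)).measurable, C,
    fun x => abs_integral_le_of_abs_le hC (κ x)⟩

end IsBoundedMeasurable

lemma abs_pow_mul_le {γ a C : ℝ} (hγ0 : 0 ≤ γ) (ha : |a| ≤ C) (n : ℕ) :
    |γ ^ n * a| ≤ C * γ ^ n := by
  rw [abs_mul, abs_pow, abs_of_nonneg hγ0, mul_comm]
  exact mul_le_mul_of_nonneg_right ha (pow_nonneg hγ0 n)

lemma summable_of_abs_le_mul_pow {γ C : ℝ} (hγ0 : 0 ≤ γ) (hγ1 : γ < 1) {a : ℕ → ℝ}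
    (ha : ∀ n, |a n| ≤ C * γ ^ n) : Summable a :=
  .of_norm_bounded ((summable_geometric_of_lt_one hγ0 hγ1).mul_left C) ha

instance isMarkovKernel_kIter (κ : Kernel X X) [IsMarkovKernel κ] (n : ℕ) :
    IsMarkovKernel (kIter κ n) := by
  induction n with
  | zero => exact inferInstanceAs (IsMarkovKernel Kernel.id)
  | succ n ih => exact inferInstanceAs (IsMarkovKernel (κ ∘ₖ kIter κ n))

lemma kIter_succ' (κ : Kernel X X) (n : ℕ) : kIter κ (n + 1) = kIter κ n ∘ₖ κ := by
  induction n with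
  | zero => exact (Kernel.comp_id κ).trans (Kernel.id_comp κ).symm
  | succ n ih => exact (congrArg (κ ∘ₖ ·) ih).trans (Kernel.comp_assoc _ _ _).symm

lemma integral_kIter_succ (κ : Kernel X X) [IsMarkovKernel κ] {f : X → ℝ}
    (hf : IsBoundedMeasurable f) (n : ℕ) (x : X) :
    ∫ y, f y ∂kIter κ (n + 1) x = ∫ z, ∫ y, f y ∂kIter κ n z ∂κ x := by
  rw [kIter_succ']
  exact Kernel.integral_comp (hf.integrable _)

instance isProbabilityMeasure_marginal (η : Kernel X X) [IsMarkovKernel η] (μ₀ : Measure X)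
    [IsProbabilityMeasure μ₀] (t : ℕ) : IsProbabilityMeasure (marginal η μ₀ t) :=
  inferInstanceAs (IsProbabilityMeasure (kIter η t ∘ₘ μ₀))

lemma marginal_zero (η : Kernel X X) (μ₀ : Measure X) : marginal η μ₀ 0 = μ₀ :=
  Measure.bind_dirac

lemma integral_marginal_succ (η : Kernel X X) [IsMarkovKernel η] (μ₀ : Measure X)
    [IsProbabilityMeasure μ₀] {f : X → ℝ} (hf : IsBoundedMeasurable f) (t : ℕ) :
    ∫ y, f y ∂marginal η μ₀ (t + 1) = ∫ x, ∫ y, f y ∂η x ∂marginal η μ₀ t := by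
  have h : marginal η μ₀ (t + 1) = (η ∘ₖ Kernel.const Unit (marginal η μ₀ t)) () := by
    rw [← Measure.comp_eq_comp_const_apply]
    exact Measure.comp_assoc.symm
  rw [h]
  exact Kernel.integral_comp (hf.integrable _)

section DiscountedValue

variable (κ : Kernel X X) [IsMarkovKernel κ] {γ : ℝ} (hγ0 : 0 ≤ γ) (hγ1 : γ < 1)
  {r : X → ℝ} (hr : IsBoundedMeasurable r)
include hγ0 hγ1 hr

lemma summable_discVal (x : X) : Summable fun n => γ ^ n * ∫ y, r y ∂kIter κ n x := by
  obtain ⟨C, hC⟩ := hr.2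
  exact summable_of_abs_le_mul_pow hγ0 hγ1 fun n =>
    abs_pow_mul_le hγ0 (abs_integral_le_of_abs_le hC _) n

lemma isBoundedMeasurable_discVal : IsBoundedMeasurable (discVal κ γ r) := by
  obtain ⟨C, hC⟩ := hr.2
  refine ⟨.tsum fun n => ((hr.integral_kernel (kIter κ n)).const_mul _).1, C * (1 - γ)⁻¹,
    fun x => ?_⟩
  rw [← Real.norm_eq_abs]
  exact tsum_of_norm_bounded ((hasSum_geometric_of_lt_one hγ0 hγ1).mul_left C) fun n =>
    abs_pow_mul_le hγ0 (abs_integral_le_of_abs_le hC _) n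

lemma discVal_eq_add_integral (x : X) :
    discVal κ γ r x = r x + γ * ∫ y, discVal κ γ r y ∂κ x := by
  obtain ⟨C, hC⟩ := hr.2
  have hswap : ∫ z, discVal κ γ r z ∂κ x
      = ∑' n, ∫ z, γ ^ n * ∫ y, r y ∂kIter κ n z ∂κ x := by
    refine (integral_tsum_of_summable_integral_norm
      (fun n => ((hr.integral_kernel (kIter κ n)).const_mul _).integrable _) ?_).symm
    exact summable_of_abs_le_mul_pow hγ0 hγ1 fun n => abs_integral_le_of_abs_le (fun z =>
      (abs_norm _).trans_le (abs_pow_mul_le hγ0 (abs_integral_le_of_abs_le hC _) n)) _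
  rw [discVal, (summable_discVal κ hγ0 hγ1 hr x).tsum_eq_zero_add, hswap, ← tsum_mul_left]
  congr 1
  · simp [kIter, Kernel.id_apply, integral_dirac' r x hr.1.stronglyMeasurable]
  · refine tsum_congr fun n => ?_
    rw [integral_kIter_succ κ hr, integral_const_mul, pow_succ]
    ring

end DiscountedValue

noncomputable def discIntegral (η : Kernel X X) (μ₀ : Measure X) (γ : ℝ) (f : X → ℝ) : ℝ :=
  ∑' t : ℕ, γ ^ t * ∫ x, f x ∂marginal η μ₀ t

section DiscountedIntegral

variable (η : Kernel X X) [IsMarkovKernel η] (μ₀ : Measure X) [IsProbabilityMeasure μ₀]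
  {γ : ℝ} (hγ0 : 0 ≤ γ) (hγ1 : γ < 1) {f g : X → ℝ}
  (hf : IsBoundedMeasurable f) (hg : IsBoundedMeasurable g)
include hγ0 hγ1 hf

lemma summable_discIntegral : Summable fun t => γ ^ t * ∫ x, f x ∂marginal η μ₀ t := by
  obtain ⟨C, hC⟩ := hf.2
  exact summable_of_abs_le_mul_pow hγ0 hγ1 fun t =>
    abs_pow_mul_le hγ0 (abs_integral_le_of_abs_le hC _) t

include hg in
lemma discIntegral_add :
    discIntegral η μ₀ γ (fun x => f x + g x) = discIntegral η μ₀ γ f + discIntegral η μ₀ γ g := by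
  rw [discIntegral, discIntegral, discIntegral, ← (summable_discIntegral η μ₀ hγ0 hγ1 hf).tsum_add
    (summable_discIntegral η μ₀ hγ0 hγ1 hg)]
  exact tsum_congr fun t => by rw [integral_add (hf.integrable _) (hg.integrable _), mul_add]

omit [IsMarkovKernel η] [IsProbabilityMeasure μ₀] hγ0 hγ1 hf in
lemma discIntegral_const_mul (c : ℝ) :
    discIntegral η μ₀ γ (fun x => c * f x) = c * discIntegral η μ₀ γ f := by
  rw [discIntegral, discIntegral, ← tsum_mul_left]
  exact tsum_congr fun t => by rw [integral_const_mul]; ring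

include hg in
lemma discIntegral_sub :
    discIntegral η μ₀ γ (fun x => f x - g x) = discIntegral η μ₀ γ f - discIntegral η μ₀ γ g := by
  have h := discIntegral_add η μ₀ hγ0 hγ1 hf (hg.const_mul (-1))
  rw [discIntegral_const_mul] at h
  simpa only [neg_one_mul, ← sub_eq_add_neg] using h

include hg in
lemma abs_discIntegral_le (hfg : ∀ x, |f x| ≤ g x) :
    |discIntegral η μ₀ γ f| ≤ discIntegral η μ₀ γ g := by
  rw [← Real.norm_eq_abs]
  refine tsum_of_norm_bounded (summable_discIntegral η μ₀ hγ0 hγ1 hg).hasSum fun t => ?_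
  rw [norm_mul, norm_pow, Real.norm_of_nonneg hγ0]
  exact mul_le_mul_of_nonneg_left ((norm_integral_le_integral_norm _).trans
    (integral_mono (hf.integrable _).norm (hg.integrable _) hfg)) (pow_nonneg hγ0 t)

omit [IsMarkovKernel η] [IsProbabilityMeasure μ₀] hγ1 hf in
lemma discIntegral_nonneg (hf0 : ∀ x, 0 ≤ f x) : 0 ≤ discIntegral η μ₀ γ f :=
  tsum_nonneg fun t => mul_nonneg (pow_nonneg hγ0 t) (integral_nonneg hf0)

lemma integral_eq_discIntegral_sub_integral :
    ∫ x, f x ∂μ₀ = discIntegral η μ₀ γ (fun x => f x - γ * ∫ y, f y ∂η x) := by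
  set b : ℕ → ℝ := fun t => γ ^ t * ∫ x, f x ∂marginal η μ₀ t
  have hb : Summable b := summable_discIntegral η μ₀ hγ0 hγ1 hf
  have hstep t : γ ^ t * ∫ x, (f x - γ * ∫ y, f y ∂η x) ∂marginal η μ₀ t = b t - b (t + 1) := by
    rw [integral_sub (hf.integrable _) (((hf.integral_kernel η).const_mul γ).integrable _),
      integral_const_mul, ← integral_marginal_succ η μ₀ hf]
    simp only [b]
    ring
  rw [discIntegral, tsum_congr hstep, hb.tsum_sub ((summable_nat_add_iff 1).2 hb),
    hb.tsum_eq_zero_add]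
  simp [b, marginal_zero]

end DiscountedIntegral

lemma abs_discJ_sub_discIntegral_le (κ η : Kernel X X) [IsMarkovKernel κ] [IsMarkovKernel η]
    (μ₀ : Measure X) [IsProbabilityMeasure μ₀] {γ : ℝ} (hγ0 : 0 ≤ γ) (hγ1 : γ < 1)
    {r u : X → ℝ} (hr : IsBoundedMeasurable r) (hu : IsBoundedMeasurable u)
    (hgap : ∀ x, |∫ y, discVal κ γ r y ∂η x - ∫ y, discVal κ γ r y ∂κ x| ≤ u x) :
    |discJ κ γ r μ₀ - discIntegral η μ₀ γ r| ≤ γ * discIntegral η μ₀ γ u := by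
  set V := discVal κ γ r
  have hV : IsBoundedMeasurable V := isBoundedMeasurable_discVal κ hγ0 hγ1 hr
  have hD : IsBoundedMeasurable fun x => ∫ y, V y ∂κ x - ∫ y, V y ∂η x :=
    (hV.integral_kernel κ).sub (hV.integral_kernel η)
  have hJ : discJ κ γ r μ₀
      = discIntegral η μ₀ γ r + γ * discIntegral η μ₀ γ fun x => ∫ y, V y ∂κ x - ∫ y, V y ∂η x :=
    calc discJ κ γ r μ₀
        = discIntegral η μ₀ γ fun x => V x - γ * ∫ y, V y ∂η x :=
          integral_eq_discIntegral_sub_integral η μ₀ hγ0 hγ1 hV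
      _ = discIntegral η μ₀ γ fun x => r x + γ * (∫ y, V y ∂κ x - ∫ y, V y ∂η x) := by
          congr 1
          funext x
          rw [show V x = _ from discVal_eq_add_integral κ hγ0 hγ1 hr x]
          ring
      _ = _ := by
          rw [discIntegral_add η μ₀ hγ0 hγ1 hr (hD.const_mul γ), discIntegral_const_mul]
  rw [hJ, add_sub_cancel_left, abs_mul, abs_of_nonneg hγ0]
  exact mul_le_mul_of_nonneg_left (abs_discIntegral_le η μ₀ hγ0 hγ1 hD hu fun x =>
    abs_sub_comm (∫ y, V y ∂κ x) _ ▸ hgap x) hγ0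

end

theorem stmt10_general {X : Type*} [MeasurableSpace X]
    (γ : ℝ) (hγ0 : 0 ≤ γ) (hγ1 : γ < 1)
    (r : X → ℝ) (hr : Measurable r)
    (rmax : ℝ) (hr0 : ∀ x, 0 ≤ r x) (hrmax : ∀ x, r x ≤ rmax)
    (μ₀ : Measure X) [IsProbabilityMeasure μ₀]
    (lam : ℝ) (hlam : γ ≤ lam)
    {P : Type*} (κ η : P → Kernel X X)
    [∀ p, IsMarkovKernel (κ p)] [∀ p, IsMarkovKernel (η p)]
    (u : P → X → ℝ) (hum : ∀ p, Measurable (u p)) (hub : ∀ p, ∃ C, ∀ x, |u p x| ≤ C)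
    (hgap : ∀ p x, |(∫ y, discVal (κ p) γ r y ∂(η p x))
      - ∫ y, discVal (κ p) γ r y ∂(κ p x)| ≤ u p x)
    (tJ : P → ℝ)
    (htJ : ∀ p, tJ p = ∑' t : ℕ, γ ^ t * ∫ x, (r x - lam * u p x) ∂(marginal (η p) μ₀ t))
    (eps : P → ℝ)
    (heps : ∀ p, eps p = ∑' t : ℕ, γ ^ t * ∫ x, u p x ∂(marginal (η p) μ₀ t))
    (phat : P) (hopt : ∀ p, tJ p ≤ tJ phat) :
    ∀ p, discJ (κ p) γ r μ₀ - (lam + γ) * eps p ≤ discJ (κ phat) γ r μ₀ := by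
  intro p
  have hrb : IsBoundedMeasurable r :=
    ⟨hr, rmax, fun x => (abs_of_nonneg (hr0 x)).trans_le (hrmax x)⟩
  have hu q : IsBoundedMeasurable (u q) := ⟨hum q, hub q⟩
  have hε q : eps q = discIntegral (η q) μ₀ γ (u q) := heps q
  have htJ_eq q : tJ q = discIntegral (η q) μ₀ γ r - lam * eps q := by
    rw [hε, ← discIntegral_const_mul,
      ← discIntegral_sub (η q) μ₀ hγ0 hγ1 hrb ((hu q).const_mul lam)]
    exact htJ q
  have hsim q : |discJ (κ q) γ r μ₀ - discIntegral (η q) μ₀ γ r| ≤ γ * eps q :=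
    hε q ▸ abs_discJ_sub_discIntegral_le (κ q) (η q) μ₀ hγ0 hγ1 hrb (hu q) (hgap q)
  have heps_hat : 0 ≤ eps phat :=
    hε phat ▸ discIntegral_nonneg (η phat) μ₀ hγ0 fun x => (abs_nonneg _).trans (hgap phat x)
  have := mul_le_mul_of_nonneg_right hlam heps_hat
  linarith [abs_le.1 (hsim p), abs_le.1 (hsim phat), htJ_eq p, htJ_eq phat, hopt p]

/-- **Suboptimality inequality for the uncertainty-penalized maximizer** (key step of the
paper's Theorem 4): for each policy `p`, `κ p` is the physical-system chain, `η p` the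
digital-twin chain and `u p ≥ 0` a bounded measurable bound on the one-step
value-prediction gap; if `phat` maximizes the penalized objective
`J̃(p) = Σ_t γ^t ∫ (r − λ·u p) dμ^{η p}_t` (with `λ ≥ γ`), then for every `p`,
`J(κ phat) ≥ J(κ p) − (λ+γ)·ε(p)` where `ε(p) = Σ_t γ^t ∫ u p dμ^{η p}_t`. -/
theorem stmt10 {X : Type*} [MeasurableSpace X]
    (γ : ℝ) (hγ0 : 0 ≤ γ) (hγ1 : γ < 1)
    (r : X → ℝ) (hr : Measurable r)
    (rmax : ℝ) (hr0 : ∀ x, 0 ≤ r x) (hrmax : ∀ x, r x ≤ rmax)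
    (μ₀ : Measure X) [IsProbabilityMeasure μ₀]
    (lam : ℝ) (hlam : γ ≤ lam)
    {P : Type*} (κ η : P → Kernel X X)
    [∀ p, IsMarkovKernel (κ p)] [∀ p, IsMarkovKernel (η p)]
    (u : P → X → ℝ) (hum : ∀ p, Measurable (u p)) (hub : ∀ p, ∃ C, ∀ x, |u p x| ≤ C)
    (hu0 : ∀ p x, 0 ≤ u p x)
    (hgap : ∀ p x, |(∫ y, discVal (κ p) γ r y ∂(η p x))
      - ∫ y, discVal (κ p) γ r y ∂(κ p x)| ≤ u p x)
    (tJ : P → ℝ)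
    (htJ : ∀ p, tJ p = ∑' t : ℕ, γ ^ t * ∫ x, (r x - lam * u p x) ∂(marginal (η p) μ₀ t))
    (eps : P → ℝ)
    (heps : ∀ p, eps p = ∑' t : ℕ, γ ^ t * ∫ x, u p x ∂(marginal (η p) μ₀ t))
    (phat : P) (hopt : ∀ p, tJ p ≤ tJ phat) :
    ∀ p, discJ (κ p) γ r μ₀ - (lam + γ) * eps p ≤ discJ (κ phat) γ r μ₀ :=
  stmt10_general γ hγ0 hγ1 r hr rmax hr0 hrmax μ₀ lam hlam κ η u hum hub hgap tJ htJ eps heps phat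
    hopt
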